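/- Let A, G be symmetric positive definite n×n matrices with (1/ξ)A ⪯ G ⪯ η A for some ξ, η ≥ 1, let φ ∈ [0,1] and u any vector. Define ψ(A,G) = tr(A⁻¹(G-A)) - ln det(A⁻¹G), θ(A,G,u) = [uᵀ(G-A)A⁻¹(G-A)u / (uᵀ G A⁻¹ G u)]^{1/2} (θ=0 for u=0), and ω(t) = t - ln(1+t). Then ψ(A,G) - ψ(A, Broyd_φ(A,G,u)) ≥ φ·ω(θ(A,G,u)/(ξ^{3/2}√η)) + (1-φ)·ω(θ(A,G,u)/ξ). -/

import Mathlib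

open Matrix

noncomputable def DFPupd {n : ℕ} (A G : Matrix (Fin n) (Fin n) ℝ) (u : Fin n → ℝ) :
    Matrix (Fin n) (Fin n) ℝ :=
  G - ((u ⬝ᵥ A.mulVec u)⁻¹) •
      (vecMulVec (A.mulVec u) (G.mulVec u) + vecMulVec (G.mulVec u) (A.mulVec u))
    + (((u ⬝ᵥ G.mulVec u) / (u ⬝ᵥ A.mulVec u) + 1) * (u ⬝ᵥ A.mulVec u)⁻¹) •
      vecMulVec (A.mulVec u) (A.mulVec u)

noncomputable def BFGSupd {n : ℕ} (A G : Matrix (Fin n) (Fin n) ℝ) (u : Fin n → ℝ) :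
    Matrix (Fin n) (Fin n) ℝ :=
  G - ((u ⬝ᵥ G.mulVec u)⁻¹) • vecMulVec (G.mulVec u) (G.mulVec u)
    + ((u ⬝ᵥ A.mulVec u)⁻¹) • vecMulVec (A.mulVec u) (A.mulVec u)

noncomputable def Broyd {n : ℕ} (φ : ℝ) (A G : Matrix (Fin n) (Fin n) ℝ) (u : Fin n → ℝ) :
    Matrix (Fin n) (Fin n) ℝ :=
  if u = 0 then G else φ • DFPupd A G u + (1 - φ) • BFGSupd A G u

/-- Closeness measure θ(A, G, u). -/
noncomputable def theta {n : ℕ} (A G : Matrix (Fin n) (Fin n) ℝ) (u : Fin n → ℝ) : ℝ :=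
  if u = 0 then 0 else
    Real.sqrt ((u ⬝ᵥ ((G - A) * A⁻¹ * (G - A)).mulVec u) /
      (u ⬝ᵥ (G * A⁻¹ * G).mulVec u))

/-- Trace potential σ(A, G). -/
noncomputable def sigmaPot {n : ℕ} (A G : Matrix (Fin n) (Fin n) ℝ) : ℝ :=
  (A⁻¹ * (G - A)).trace

/-- Byrd–Nocedal potential ψ(A, G). -/
noncomputable def psiPot {n : ℕ} (A G : Matrix (Fin n) (Fin n) ℝ) : ℝ :=
  (A⁻¹ * (G - A)).trace - Real.log (A⁻¹ * G).det

noncomputable def omegaFn (t : ℝ) : ℝ := t - Real.log (1 + t)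

/-!
Write `a = uᵀAu`, `g = uᵀGu`, `s = (Gu)ᵀA⁻¹(Gu)` and `σ = (Au)ᵀG⁻¹(Au)`. The Broyden update is
the rank-two perturbation `G + WᵀCW` of `G`, where `W` has rows `Gu` and `Au`, so both its trace
against `A⁻¹` and its determinant relative to `G` reduce to `2 × 2` computations:
`ψ(A,G) - ψ(A,G₊) = φ (g/a - 1) + (1 - φ) (s/g - 1) + log (φ σ/a + (1 - φ) a/g)`.
Concavity of `log` splits this into `φ` times the DFP progress `g/a - 1 + log (σ/a)` and `1 - φ`
times the BFGS progress `s/g - 1 + log (a/g)`. Each has the shape `Y - 1 + log Q = ω(Y - 1) + log (YQ)`,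
and `ω c ≤ ω d + log (1 + c² - d²)` for `0 ≤ d < c ≤ 1` bounds it below by `ω c` once
`c² ≤ YQ - 1 + (Y - 1)²`. With `θ² = (s - 2g + a)/s`, this follows from Cauchy–Schwarz, from
`a ≤ ξ g`, and from `A⁻¹ ⪯ η G⁻¹`, the inverse form of `G ⪯ η A`.
-/

lemma omegaFn_le_omegaFn {s t : ℝ} (hs : 0 ≤ s) (hst : s ≤ t) : omegaFn s ≤ omegaFn t := by
  have hs1 : 0 < 1 + s := by linarith
  have ht1 : 0 < 1 + t := by linarith
  have hlog := Real.log_le_sub_one_of_pos (div_pos ht1 hs1)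
  rw [Real.log_div ht1.ne' hs1.ne'] at hlog
  have : (1 + t) / (1 + s) - 1 ≤ t - s := by
    rw [div_sub_one (by positivity), div_le_iff₀ (by positivity)]
    nlinarith
  unfold omegaFn
  linarith

lemma omegaFn_le_omegaFn_neg {d : ℝ} (h0 : 0 ≤ d) (h1 : d < 1) : omegaFn d ≤ omegaFn (-d) := by
  have hs := Real.hasSum_log_sub_log_of_abs_lt_one (x := d) (by rwa [abs_of_nonneg h0])
  have h2d := le_hasSum hs 0 fun k _ ↦ by positivity
  norm_num at h2d
  unfold omegaFn
  rw [← sub_eq_add_neg]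
  linarith

lemma omegaFn_abs_le {t : ℝ} (ht : -1 < t) : omegaFn |t| ≤ omegaFn t := by
  rcases le_or_gt 0 t with h | h
  · rw [abs_of_nonneg h]
  · simpa [abs_of_neg h] using omegaFn_le_omegaFn_neg (neg_nonneg.2 h.le) (by linarith)

lemma omegaFn_le_omegaFn_add_log {c d P : ℝ} (hd : 0 ≤ d) (hc0 : 0 ≤ c) (hc1 : c ≤ 1)
    (hP1 : 1 ≤ P) (hP : 1 + c ^ 2 - d ^ 2 ≤ P) : omegaFn c ≤ omegaFn d + Real.log P := by
  rcases le_or_gt c d with hcd | hdc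
  · linarith [omegaFn_le_omegaFn hc0 hcd, Real.log_nonneg hP1]
  set z := c ^ 2 - d ^ 2
  have hz : 0 ≤ z := by nlinarith
  -- `ω c - ω d ≤ (c - d) c / (1 + c) ≤ z / (1 + z) ≤ log (1 + z) ≤ log P`
  have hratio : (c - d) / (1 + c) ≤ Real.log (1 + c) - Real.log (1 + d) := by
    have := Real.one_sub_inv_le_log_of_pos (x := (1 + c) / (1 + d)) (by positivity)
    rw [Real.log_div (by positivity) (by positivity), inv_div] at this
    convert this using 1
    field_simp
    ring
  have hquad : (c - d) * c / (1 + c) ≤ z / (1 + z) := by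
    rw [div_le_div_iff₀ (by positivity) (by positivity)]
    have : c * z ≤ c ^ 2 := by nlinarith [mul_le_mul_of_nonneg_left hc1 (sq_nonneg c)]
    nlinarith [mul_le_mul_of_nonneg_left this (sub_nonneg.2 hdc.le),
      mul_nonneg (sub_nonneg.2 hdc.le) (mul_nonneg hc0 hd), mul_nonneg (sub_nonneg.2 hdc.le) hd]
  have hlog : z / (1 + z) ≤ Real.log (1 + z) := by
    have := Real.one_sub_inv_le_log_of_pos (x := 1 + z) (by positivity)
    convert this using 1
    field_simp
    ring
  have hP' : Real.log (1 + z) ≤ Real.log P := Real.log_le_log (by positivity) (by linarith)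
  have : (c - d) - (c - d) / (1 + c) = (c - d) * c / (1 + c) := by field_simp; ring
  unfold omegaFn
  linarith

section Scalar

variable {a g s σ ξ η θ : ℝ}

lemma omegaFn_le_sub_one_add_log {Y Q c : ℝ} (hY : 0 < Y) (hc0 : 0 ≤ c) (hc1 : c ≤ 1)
    (hYQ : 1 ≤ Y * Q) (h : 1 + c ^ 2 - (Y - 1) ^ 2 ≤ Y * Q) :
    omegaFn c ≤ Y - 1 + Real.log Q := by
  have hQ : 0 < Q := pos_of_mul_pos_right (by linarith) hY.le
  have h1 := omegaFn_le_omegaFn_add_log (abs_nonneg (Y - 1)) hc0 hc1 hYQ (by rwa [sq_abs])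
  have h2 := omegaFn_abs_le (t := Y - 1) (by linarith)
  have h3 : omegaFn (Y - 1) = Y - 1 - Real.log Y := by simp [omegaFn]
  rw [Real.log_mul hY.ne' hQ.ne'] at h1
  linarith

lemma le_of_sq_mul_eq_sub_two_mul_add (hξ : 1 ≤ ξ) (ha : 0 < a) (hg : 0 < g)
    (hgs : g ^ 2 ≤ a * s) (hag : a ≤ ξ * g) (hθ0 : 0 ≤ θ)
    (hθ : θ ^ 2 * s = s - 2 * g + a) : θ ≤ ξ := by
  have hs : 0 < s := by nlinarith
  have hgξs : g ≤ ξ * s := by nlinarith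
  have : θ ^ 2 * s ≤ ξ ^ 2 * s := by nlinarith
  exact (pow_le_pow_iff_left₀ hθ0 (by linarith) two_ne_zero).1 (le_of_mul_le_mul_right this hs)

lemma omegaFn_le_progress_bfgs (hξ : 1 ≤ ξ) (ha : 0 < a) (hg : 0 < g)
    (hgs : g ^ 2 ≤ a * s) (hag : a ≤ ξ * g) (hθ0 : 0 ≤ θ)
    (hθ : θ ^ 2 * s = s - 2 * g + a) :
    omegaFn (θ / ξ) ≤ s / g - 1 + Real.log (a / g) := by
  have hs : 0 < s := by nlinarith
  have hgξs : g ≤ ξ * s := by nlinarith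
  have hθξ := le_of_sq_mul_eq_sub_two_mul_add hξ ha hg hgs hag hθ0 hθ
  have hid : s / g * (a / g) = 1 + θ ^ 2 * s ^ 2 / g ^ 2 - (s / g - 1) ^ 2 := by
    field_simp
    linear_combination (-s) * hθ
  have hc : (θ / ξ) ^ 2 ≤ θ ^ 2 * s ^ 2 / g ^ 2 := by
    rw [div_pow, div_le_div_iff₀ (by positivity) (by positivity)]
    have : g ^ 2 ≤ (ξ * s) ^ 2 := pow_le_pow_left₀ hg.le hgξs 2
    nlinarith [sq_nonneg θ]
  apply omegaFn_le_sub_one_add_log (by positivity) (by positivity)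
    ((div_le_one (by positivity)).2 hθξ)
  · rw [div_mul_div_comm, le_div_iff₀ (by positivity)]
    linarith
  · linarith

lemma rpow_three_halves_mul_sqrt_sq (hξ : 0 ≤ ξ) (hη : 0 ≤ η) :
    (ξ ^ ((3 : ℝ) / 2) * √η) ^ 2 = ξ ^ 3 * η := by
  rw [mul_pow, Real.sq_sqrt hη, ← Real.rpow_natCast, ← Real.rpow_mul hξ]
  norm_num

lemma omegaFn_le_progress_dfp (hξ : 1 ≤ ξ) (hη : 1 ≤ η) (ha : 0 < a) (hg : 0 < g)
    (hgs : g ^ 2 ≤ a * s) (haσ : a ^ 2 ≤ g * σ) (hag : a ≤ ξ * g)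
    (hinv : s - 2 * g + a ≤ η * (g - 2 * a + σ)) (hθ0 : 0 ≤ θ)
    (hθ : θ ^ 2 * s = s - 2 * g + a) :
    omegaFn (θ / (ξ ^ ((3 : ℝ) / 2) * √η)) ≤ g / a - 1 + Real.log (σ / a) := by
  set K := ξ ^ ((3 : ℝ) / 2) * √η
  have hs : 0 < s := by nlinarith
  have hK2 : K ^ 2 = ξ ^ 3 * η := rpow_three_halves_mul_sqrt_sq (by linarith) (by linarith)
  have hξK : ξ ≤ K := by
    have : ξ ^ 2 ≤ K ^ 2 := by rw [hK2]; nlinarith [pow_le_pow_right₀ hξ (show 2 ≤ 3 by norm_num)]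
    exact (pow_le_pow_iff_left₀ (by linarith) (by positivity) two_ne_zero).1 this
  have hθK : θ ≤ K := (le_of_sq_mul_eq_sub_two_mul_add hξ ha hg hgs hag hθ0 hθ).trans hξK
  have haξ : a ≤ ξ ^ 2 * s := by nlinarith
  have ha2 : a ^ 2 ≤ ξ ^ 3 * (g * s) := by nlinarith [mul_le_mul hag haξ ha.le (by positivity)]
  have hid : g / a * (σ / a) = 1 + g * (g - 2 * a + σ) / a ^ 2 - (g / a - 1) ^ 2 := by
    field_simp
    ring
  have hc : (θ / K) ^ 2 ≤ g * (g - 2 * a + σ) / a ^ 2 := by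
    rw [div_pow, hK2, div_le_div_iff₀ (by positivity) (by positivity)]
    nlinarith [mul_le_mul_of_nonneg_left ha2 (sq_nonneg θ)]
  apply omegaFn_le_sub_one_add_log (by positivity) (by positivity)
    ((div_le_one (by positivity)).2 hθK)
  · rw [div_mul_div_comm, le_div_iff₀ (by positivity)]
    linarith
  · linarith

lemma omegaFn_le_progress_broyd {φ : ℝ} (hξ : 1 ≤ ξ) (hη : 1 ≤ η) (hφ0 : 0 ≤ φ) (hφ1 : φ ≤ 1)
    (ha : 0 < a) (hg : 0 < g) (hgs : g ^ 2 ≤ a * s) (haσ : a ^ 2 ≤ g * σ)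
    (hag : a ≤ ξ * g) (hinv : s - 2 * g + a ≤ η * (g - 2 * a + σ)) :
    φ * omegaFn (√((s - 2 * g + a) / s) / (ξ ^ ((3 : ℝ) / 2) * √η)) +
        (1 - φ) * omegaFn (√((s - 2 * g + a) / s) / ξ) ≤
      φ * (g / a - 1) + (1 - φ) * (s / g - 1) +
        Real.log (φ * (σ / a) + (1 - φ) * (a / g)) := by
  have hs : 0 < s := by nlinarith
  have hσ : 0 < σ := by nlinarith
  have hθ : √((s - 2 * g + a) / s) ^ 2 * s = s - 2 * g + a := by
    rw [Real.sq_sqrt ?_, div_mul_cancel₀ _ hs.ne']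
    apply div_nonneg _ hs.le
    nlinarith [sq_nonneg (g - a)]
  have hdfp := omegaFn_le_progress_dfp hξ hη ha hg hgs haσ hag hinv (Real.sqrt_nonneg _) hθ
  have hbfgs := omegaFn_le_progress_bfgs hξ ha hg hgs hag (Real.sqrt_nonneg _) hθ
  have hconc : φ * Real.log (σ / a) + (1 - φ) * Real.log (a / g) ≤
      Real.log (φ * (σ / a) + (1 - φ) * (a / g)) :=
    strictConcaveOn_log_Ioi.concaveOn.2 (show 0 < σ / a by positivity)
      (show 0 < a / g by positivity) hφ0 (by linarith) (by ring)
  nlinarith [mul_le_mul_of_nonneg_left hdfp hφ0,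
    mul_le_mul_of_nonneg_left hbfgs (sub_nonneg.2 hφ1)]

end Scalar

namespace Matrix

variable {ι : Type*}

lemma PosDef.isSymm {M : Matrix ι ι ℝ} (hM : M.PosDef) : M.IsSymm :=
  isHermitian_iff_isSymm.1 hM.isHermitian

variable [Fintype ι]

lemma PosDef.isUnit_det [DecidableEq ι] {M : Matrix ι ι ℝ} (hM : M.PosDef) : IsUnit M.det :=
  isUnit_iff_ne_zero.2 hM.det_pos.ne'

lemma PosSemidef.dotProduct_mulVec_sq_le {M : Matrix ι ι ℝ} (hM : M.PosSemidef) (x y : ι → ℝ) :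
    (x ⬝ᵥ M *ᵥ y) ^ 2 ≤ (x ⬝ᵥ M *ᵥ x) * (y ⬝ᵥ M *ᵥ y) := by
  let := M.toSeminormedAddCommGroup hM
  let := M.toInnerProductSpace hM
  have hinner (v w : ι → ℝ) : inner ℝ v w = v ⬝ᵥ M *ᵥ w := by
    change (M *ᵥ w) ⬝ᵥ star v = _
    rw [star_trivial, dotProduct_comm]
  simpa only [sq, hinner] using real_inner_mul_inner_self_le x y

lemma dotProduct_mulVec_le_of_posSemidef_sub {M N : Matrix ι ι ℝ} (h : (N - M).PosSemidef)
    (x : ι → ℝ) : x ⬝ᵥ M *ᵥ x ≤ x ⬝ᵥ N *ᵥ x := by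
  have := h.dotProduct_mulVec_nonneg x
  rw [star_trivial, sub_mulVec, dotProduct_sub] at this
  linarith

lemma IsSymm.dotProduct_mulVec_comm {M : Matrix ι ι ℝ} (hM : M.IsSymm) (x y : ι → ℝ) :
    x ⬝ᵥ M *ᵥ y = y ⬝ᵥ M *ᵥ x := by
  rw [dotProduct_mulVec, ← mulVec_transpose, hM.eq, dotProduct_comm]

lemma IsSymm.dotProduct_mul_mul_mulVec {S : Matrix ι ι ℝ} (hS : S.IsSymm) (M : Matrix ι ι ℝ)
    (x : ι → ℝ) : x ⬝ᵥ (S * M * S) *ᵥ x = S *ᵥ x ⬝ᵥ M *ᵥ S *ᵥ x := by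
  rw [← mulVec_mulVec, ← mulVec_mulVec, hS.dotProduct_mulVec_comm, dotProduct_comm]

lemma of_mul_mul_transpose_of (x y : ι → ℝ) (M : Matrix ι ι ℝ) :
    of ![x, y] * M * (of ![x, y])ᵀ =
      !![x ⬝ᵥ M *ᵥ x, x ⬝ᵥ M *ᵥ y; y ⬝ᵥ M *ᵥ x, y ⬝ᵥ M *ᵥ y] := by
  ext i j
  fin_cases i <;> fin_cases j <;> simp [vecMul_transpose, dotProduct_mulVec, dotProduct_comm]

variable [DecidableEq ι]

lemma dotProduct_inv_mulVec_mulVec {M : Matrix ι ι ℝ} (hM : IsUnit M.det) (x y : ι → ℝ) :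
    x ⬝ᵥ M⁻¹ *ᵥ M *ᵥ y = x ⬝ᵥ y := by
  rw [mulVec_mulVec, nonsing_inv_mul _ hM, one_mulVec]

lemma IsSymm.mulVec_dotProduct_inv_mulVec {M : Matrix ι ι ℝ} (hS : M.IsSymm) (hM : IsUnit M.det)
    (x y : ι → ℝ) : M *ᵥ x ⬝ᵥ M⁻¹ *ᵥ y = x ⬝ᵥ y := by
  rw [hS.inv.dotProduct_mulVec_comm, dotProduct_inv_mulVec_mulVec hM, dotProduct_comm]

lemma IsSymm.sub_dotProduct_inv_mulVec_sub {M : Matrix ι ι ℝ} (hS : M.IsSymm)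
    (hM : IsUnit M.det) (x y : ι → ℝ) :
    (M *ᵥ x - y) ⬝ᵥ M⁻¹ *ᵥ (M *ᵥ x - y) = x ⬝ᵥ M *ᵥ x - 2 * (x ⬝ᵥ y) + y ⬝ᵥ M⁻¹ *ᵥ y := by
  simp only [mulVec_sub, dotProduct_sub, sub_dotProduct, dotProduct_inv_mulVec_mulVec hM,
    hS.mulVec_dotProduct_inv_mulVec hM, dotProduct_comm y x, dotProduct_comm (M *ᵥ x) x]
  ring

lemma PosDef.dotProduct_sq_le_mul_inv {M : Matrix ι ι ℝ} (hM : M.PosDef) (x y : ι → ℝ) :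
    (x ⬝ᵥ y) ^ 2 ≤ (x ⬝ᵥ M *ᵥ x) * (y ⬝ᵥ M⁻¹ *ᵥ y) := by
  have := hM.inv.posSemidef.dotProduct_mulVec_sq_le (M *ᵥ x) y
  rwa [hM.isSymm.mulVec_dotProduct_inv_mulVec hM.isUnit_det,
    hM.isSymm.mulVec_dotProduct_inv_mulVec hM.isUnit_det] at this

lemma PosDef.dotProduct_inv_mulVec_le {A G : Matrix ι ι ℝ} (hA : A.PosDef) (hG : G.PosDef) {η : ℝ}
    (hGA : (η • A - G).PosSemidef) (r : ι → ℝ) :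
    r ⬝ᵥ A⁻¹ *ᵥ r ≤ η * (r ⬝ᵥ G⁻¹ *ᵥ r) := by
  rcases eq_or_ne r 0 with rfl | hr
  · simp
  set w := A⁻¹ *ᵥ r
  set v := G⁻¹ *ᵥ r
  have hAw : A *ᵥ w = r := by rw [mulVec_mulVec, mul_nonsing_inv _ hA.isUnit_det, one_mulVec]
  have hGv : G *ᵥ v = r := by rw [mulVec_mulVec, mul_nonsing_inv _ hG.isUnit_det, one_mulVec]
  have hw : 0 < r ⬝ᵥ w := by simpa using hA.inv.dotProduct_mulVec_pos hr
  have hv : 0 ≤ r ⬝ᵥ v := by simpa using hG.inv.posSemidef.dotProduct_mulVec_nonneg r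
  have hvGw : v ⬝ᵥ G *ᵥ w = r ⬝ᵥ w := by
    rw [hG.isSymm.dotProduct_mulVec_comm, hGv, dotProduct_comm]
  have hvGv : v ⬝ᵥ G *ᵥ v = r ⬝ᵥ v := by rw [hGv, dotProduct_comm]
  have hwAw : w ⬝ᵥ (η • A) *ᵥ w = η * (r ⬝ᵥ w) := by
    rw [smul_mulVec, dotProduct_smul, hAw, dotProduct_comm, smul_eq_mul]
  -- Cauchy–Schwarz for `G`: `(rᵀw)² = (vᵀGw)² ≤ (vᵀGv)(wᵀGw) ≤ (rᵀv) · η (rᵀw)`.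
  have hcs := hG.posSemidef.dotProduct_mulVec_sq_le v w
  have hwGw := dotProduct_mulVec_le_of_posSemidef_sub hGA w
  rw [hvGw, hvGv] at hcs
  rw [hwAw] at hwGw
  nlinarith [mul_le_mul_of_nonneg_left hwGw hv]

end Matrix

section Broyden

variable {n : ℕ} {A G : Matrix (Fin n) (Fin n) ℝ} {u : Fin n → ℝ}

def broydFrame (A G : Matrix (Fin n) (Fin n) ℝ) (u : Fin n → ℝ) : Matrix (Fin 2) (Fin n) ℝ :=
  of ![G *ᵥ u, A *ᵥ u]

noncomputable def broydCoeff (φ a g : ℝ) : Matrix (Fin 2) (Fin 2) ℝ :=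
  !![-(1 - φ) / g, -φ / a; -φ / a, (φ * g / a + 1) / a]

lemma Broyd_eq_add_transpose_mul_mul (φ : ℝ) (hu : u ≠ 0) (ha : u ⬝ᵥ A *ᵥ u ≠ 0)
    (hg : u ⬝ᵥ G *ᵥ u ≠ 0) :
    Broyd φ A G u = G + (broydFrame A G u)ᵀ *
      (broydCoeff φ (u ⬝ᵥ A *ᵥ u) (u ⬝ᵥ G *ᵥ u) * broydFrame A G u) := by
  ext i j
  simp [Broyd, hu, DFPupd, BFGSupd, broydFrame, broydCoeff, mul_apply, Fin.sum_univ_two,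
    vecMulVec_apply]
  field_simp
  ring

lemma trace_inv_mul_sub_Broyd (hA : A.PosDef) (hG : G.PosDef) (φ : ℝ) (hu : u ≠ 0) :
    (A⁻¹ * (G - Broyd φ A G u)).trace =
      φ * (u ⬝ᵥ G *ᵥ u / u ⬝ᵥ A *ᵥ u - 1) +
        (1 - φ) * (G *ᵥ u ⬝ᵥ A⁻¹ *ᵥ G *ᵥ u / u ⬝ᵥ G *ᵥ u - 1) := by
  have ha : u ⬝ᵥ A *ᵥ u ≠ 0 := by simpa using (hA.dotProduct_mulVec_pos hu).ne'
  have hg : u ⬝ᵥ G *ᵥ u ≠ 0 := by simpa using (hG.dotProduct_mulVec_pos hu).ne'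
  have hgram : broydFrame A G u * A⁻¹ * (broydFrame A G u)ᵀ =
      !![G *ᵥ u ⬝ᵥ A⁻¹ *ᵥ G *ᵥ u, u ⬝ᵥ G *ᵥ u; u ⬝ᵥ G *ᵥ u, u ⬝ᵥ A *ᵥ u] := by
    rw [broydFrame, of_mul_mul_transpose_of, dotProduct_inv_mulVec_mulVec hA.isUnit_det,
      hA.isSymm.mulVec_dotProduct_inv_mulVec hA.isUnit_det,
      hA.isSymm.mulVec_dotProduct_inv_mulVec hA.isUnit_det, dotProduct_comm (G *ᵥ u) u]
  rw [Broyd_eq_add_transpose_mul_mul φ hu ha hg, sub_add_cancel_left, Matrix.mul_neg, trace_neg,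
    ← Matrix.mul_assoc, trace_mul_comm, Matrix.mul_assoc, ← Matrix.mul_assoc _ A⁻¹, hgram]
  simp [trace_fin_two, broydCoeff]
  field_simp
  ring

lemma det_Broyd (hG : G.PosDef) (φ : ℝ) (hu : u ≠ 0) (ha : u ⬝ᵥ A *ᵥ u ≠ 0) :
    (Broyd φ A G u).det = G.det *
      (φ * (A *ᵥ u ⬝ᵥ G⁻¹ *ᵥ A *ᵥ u / u ⬝ᵥ A *ᵥ u) + (1 - φ) * (u ⬝ᵥ A *ᵥ u / u ⬝ᵥ G *ᵥ u)) := by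
  have hg : u ⬝ᵥ G *ᵥ u ≠ 0 := by simpa using (hG.dotProduct_mulVec_pos hu).ne'
  have hgram : broydFrame A G u * G⁻¹ * (broydFrame A G u)ᵀ =
      !![u ⬝ᵥ G *ᵥ u, u ⬝ᵥ A *ᵥ u; u ⬝ᵥ A *ᵥ u, A *ᵥ u ⬝ᵥ G⁻¹ *ᵥ A *ᵥ u] := by
    rw [broydFrame, of_mul_mul_transpose_of, hG.isSymm.mulVec_dotProduct_inv_mulVec hG.isUnit_det,
      hG.isSymm.mulVec_dotProduct_inv_mulVec hG.isUnit_det,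
      dotProduct_inv_mulVec_mulVec hG.isUnit_det, dotProduct_comm (A *ᵥ u) u]
  rw [Broyd_eq_add_transpose_mul_mul φ hu ha hg, det_add_mul _ _ hG.isUnit_det, Matrix.mul_assoc,
    Matrix.mul_assoc, ← Matrix.mul_assoc (broydFrame A G u), hgram]
  congr 1
  simp [det_fin_two, broydCoeff]
  field_simp
  ring

lemma psiPot_sub_psiPot {G' : Matrix (Fin n) (Fin n) ℝ} (hA : IsUnit A.det) (hG : G.det ≠ 0)
    (hG' : G'.det ≠ 0) :
    psiPot A G - psiPot A G' = (A⁻¹ * (G - G')).trace + Real.log (G'.det / G.det) := by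
  have hAi : A⁻¹.det ≠ 0 := (isUnit_nonsing_inv_det A hA).ne_zero
  simp only [psiPot, det_mul, Real.log_mul hAi hG, Real.log_mul hAi hG', Real.log_div hG' hG,
    Matrix.mul_sub, trace_sub]
  ring

lemma psiPot_sub_psiPot_Broyd (hA : A.PosDef) (hG : G.PosDef) {φ : ℝ} (hφ : φ ∈ Set.Icc (0 : ℝ) 1)
    (hu : u ≠ 0) :
    psiPot A G - psiPot A (Broyd φ A G u) =
      φ * (u ⬝ᵥ G *ᵥ u / u ⬝ᵥ A *ᵥ u - 1) +
        (1 - φ) * (G *ᵥ u ⬝ᵥ A⁻¹ *ᵥ G *ᵥ u / u ⬝ᵥ G *ᵥ u - 1) +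
        Real.log (φ * (A *ᵥ u ⬝ᵥ G⁻¹ *ᵥ A *ᵥ u / u ⬝ᵥ A *ᵥ u) +
          (1 - φ) * (u ⬝ᵥ A *ᵥ u / u ⬝ᵥ G *ᵥ u)) := by
  have ha : 0 < u ⬝ᵥ A *ᵥ u := by simpa using hA.dotProduct_mulVec_pos hu
  have hg : 0 < u ⬝ᵥ G *ᵥ u := by simpa using hG.dotProduct_mulVec_pos hu
  have hσ : 0 < A *ᵥ u ⬝ᵥ G⁻¹ *ᵥ A *ᵥ u := by
    simpa using hG.inv.dotProduct_mulVec_pos (x := A *ᵥ u) fun h ↦ by simp [h] at ha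
  have hr : 0 < φ * (A *ᵥ u ⬝ᵥ G⁻¹ *ᵥ A *ᵥ u / u ⬝ᵥ A *ᵥ u) +
      (1 - φ) * (u ⬝ᵥ A *ᵥ u / u ⬝ᵥ G *ᵥ u) := by
    simpa using convex_Ioi (0 : ℝ) (show 0 < A *ᵥ u ⬝ᵥ G⁻¹ *ᵥ A *ᵥ u / u ⬝ᵥ A *ᵥ u by positivity)
      (show 0 < u ⬝ᵥ A *ᵥ u / u ⬝ᵥ G *ᵥ u by positivity) hφ.1 (sub_nonneg.2 hφ.2)
      (add_sub_cancel φ 1)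
  have hdet := det_Broyd hG φ hu ha.ne'
  have hdet0 : (Broyd φ A G u).det ≠ 0 := by
    rw [hdet]
    exact mul_ne_zero hG.det_pos.ne' hr.ne'
  rw [psiPot_sub_psiPot hA.isUnit_det hG.det_pos.ne' hdet0, hdet,
    mul_div_cancel_left₀ _ hG.det_pos.ne', trace_inv_mul_sub_Broyd hA hG φ hu]

lemma theta_eq_sqrt (hA : A.PosDef) (hG : G.PosDef) (hu : u ≠ 0) :
    theta A G u =
      √((G *ᵥ u ⬝ᵥ A⁻¹ *ᵥ G *ᵥ u - 2 * (u ⬝ᵥ G *ᵥ u) + u ⬝ᵥ A *ᵥ u) /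
        G *ᵥ u ⬝ᵥ A⁻¹ *ᵥ G *ᵥ u) := by
  rw [theta, if_neg hu, (hG.isSymm.sub hA.isSymm).dotProduct_mul_mul_mulVec,
    hG.isSymm.dotProduct_mul_mul_mulVec, sub_mulVec, ← neg_sub, mulVec_neg,
    neg_dotProduct_neg, hA.isSymm.sub_dotProduct_inv_mulVec_sub hA.isUnit_det]
  ring_nf

end Broyden

theorem psi_progress {n : ℕ} (A G : Matrix (Fin n) (Fin n) ℝ)
    (hA : A.PosDef) (hG : G.PosDef) (ξ η : ℝ) (hξ : 1 ≤ ξ) (hη : 1 ≤ η)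
    (hlow : (G - ξ⁻¹ • A).PosSemidef) (hup : (η • A - G).PosSemidef)
    (φ : ℝ) (hφ : φ ∈ Set.Icc (0 : ℝ) 1) (u : Fin n → ℝ) :
    psiPot A G - psiPot A (Broyd φ A G u) ≥
      φ * omegaFn (theta A G u / (ξ ^ ((3 : ℝ) / 2) * Real.sqrt η)) +
        (1 - φ) * omegaFn (theta A G u / ξ) := by
  rcases eq_or_ne u 0 with rfl | hu
  · simp [Broyd, theta, omegaFn]
  have ha : 0 < u ⬝ᵥ A *ᵥ u := by simpa using hA.dotProduct_mulVec_pos hu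
  have hg : 0 < u ⬝ᵥ G *ᵥ u := by simpa using hG.dotProduct_mulVec_pos hu
  have hag : u ⬝ᵥ A *ᵥ u ≤ ξ * (u ⬝ᵥ G *ᵥ u) := by
    have := dotProduct_mulVec_le_of_posSemidef_sub hlow u
    rw [smul_mulVec, dotProduct_smul, smul_eq_mul] at this
    exact (inv_mul_le_iff₀ (by linarith)).1 this
  have hinv := hA.dotProduct_inv_mulVec_le hG hup (G *ᵥ u - A *ᵥ u)
  rw [hG.isSymm.sub_dotProduct_inv_mulVec_sub hG.isUnit_det, ← neg_sub, mulVec_neg,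
    neg_dotProduct_neg, hA.isSymm.sub_dotProduct_inv_mulVec_sub hA.isUnit_det] at hinv
  rw [ge_iff_le, psiPot_sub_psiPot_Broyd hA hG hφ hu, theta_eq_sqrt hA hG hu]
  exact omegaFn_le_progress_broyd hξ hη hφ.1 hφ.2 ha hg (hA.dotProduct_sq_le_mul_inv u (G *ᵥ u))
    (hG.dotProduct_sq_le_mul_inv u (A *ᵥ u)) hag (by linarith)
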